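/- arXiv:2308.12390 — 4 statements merged into one kernel-verified Lean document; each statement's English description precedes it below -/
import Mathlib

section
/- In the group ring ℤ[t]/(t^n - 1) with n = 4k+1, the element α = t^{k+1} + t^k - t^{-k} - t^{-(k+1)} generates the same ideal as t - 1. -/
lemma aux_even_sum {R : Type*} [CommRing R] (x : R) :
    ∀ m : ℕ, (x + 1) * ∑ i ∈ Finset.range m, (x ^ 2) ^ i = ∑ i ∈ Finset.range (2 * m), x ^ i := by
  intro m
  induction m with
  | zero => simp
  | succ m ih =>
    rw [Finset.sum_range_succ, mul_add, ih]
    have h2 : 2 * (m + 1) = (2 * m + 1) + 1 := by ring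
    rw [h2, Finset.sum_range_succ, Finset.sum_range_succ]
    ring

set_option maxHeartbeats 1000000 in
/-- In the group ring `ℤ[t]/(t^n - 1)` with `n = 4k+1`, the element
`α = t^{k+1} + t^k - t^{-k} - t^{-(k+1)}` (negative exponents interpreted via
`t⁻¹ = t^{n-1}`, so `t^{-k} = t^{3k+1}` and `t^{-(k+1)} = t^{3k}`) generates
the same ideal as `t - 1`. -/
theorem stmt_2 (k : ℕ) (hk : 1 ≤ k)
    (t : Polynomial ℤ ⧸ Ideal.span {Polynomial.X ^ (4 * k + 1) - 1})
    (ht : t = Ideal.Quotient.mk _ Polynomial.X) :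
    Ideal.span {t ^ (k + 1) + t ^ k - t ^ (3 * k + 1) - t ^ (3 * k)} =
      Ideal.span {t - 1} := by
  have htn : t ^ (4 * k + 1) = 1 := by
    have h0 : (Ideal.Quotient.mk (Ideal.span {(Polynomial.X : Polynomial ℤ) ^ (4 * k + 1) - 1}))
        ((Polynomial.X : Polynomial ℤ) ^ (4 * k + 1) - 1) = 0 :=
      Ideal.Quotient.eq_zero_iff_mem.mpr (Ideal.subset_span (Set.mem_singleton _))
    rw [map_sub, map_pow, map_one, sub_eq_zero] at h0
    rw [ht, h0]
  have hG : (∑ i ∈ Finset.range (2 * k), t ^ i) * (t - 1) = t ^ (2 * k) - 1 :=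
    geom_sum_mul t (2 * k)
  have hN : (∑ i ∈ Finset.range (4 * k + 1), t ^ i) * (t - 1) = 0 := by
    rw [geom_sum_mul, htn, sub_self]
  have hNG : (∑ i ∈ Finset.range (4 * k + 1), t ^ i) * (t ^ (2 * k) - 1) = 0 := by
    rw [← hG, ← mul_assoc, mul_comm (∑ i ∈ Finset.range (4 * k + 1), t ^ i),
      mul_assoc, hN, mul_zero]
  have hB : (t + 1) * (t * ∑ i ∈ Finset.range (2 * k), (t ^ 2) ^ i)
      = (∑ i ∈ Finset.range (4 * k + 1), t ^ i) - 1 := by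
    rw [← mul_assoc, mul_comm (t + 1) t, mul_assoc, aux_even_sum]
    rw [show 2 * (2 * k) = 4 * k from by ring]
    rw [Finset.sum_range_succ' (fun i => t ^ i) (4 * k)]
    rw [Finset.mul_sum]
    simp only [pow_zero, pow_succ]
    rw [add_sub_cancel_right]
    exact Finset.sum_congr rfl fun i _ => mul_comm _ _
  -- forward: (t-1) ∣ α
  have key1 : t ^ (k + 1) + t ^ k - t ^ (3 * k + 1) - t ^ (3 * k)
      = (t - 1) * (-((t + 1) * t ^ k * ∑ i ∈ Finset.range (2 * k), t ^ i)) := by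
    linear_combination ((t + 1) * t ^ k) * hG
  have h1 : (t ^ (k + 1) + t ^ k - t ^ (3 * k + 1) - t ^ (3 * k)) *
      (t ^ (3 * k + 1) * (t * ∑ i ∈ Finset.range (2 * k), (t ^ 2) ^ i))
      = t ^ (2 * k) - 1 := by
    linear_combination ((1 - t ^ (2 * k)) * t ^ (4 * k + 1)) * hB +
      (((∑ i ∈ Finset.range (4 * k + 1), t ^ i) - 1) * (1 - t ^ (2 * k))) * htn - hNG
  obtain ⟨j, rfl⟩ : ∃ j, k = j + 1 := ⟨k - 1, by omega⟩
  have hpow : (t ^ (2 * (j + 1))) ^ (4 * j + 3) = (t ^ (4 * (j + 1) + 1)) ^ (2 * j + 1) * t := by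
    rw [← pow_mul, ← pow_mul, ← pow_succ]
    congr 1
    ring
  have h2 : (∑ i ∈ Finset.range (4 * j + 3), (t ^ (2 * (j + 1))) ^ i) *
      (t ^ (2 * (j + 1)) - 1) = t - 1 := by
    rw [geom_sum_mul, hpow, htn, one_pow, one_mul]
  have key2 : t - 1 = (t ^ ((j + 1) + 1) + t ^ (j + 1) - t ^ (3 * (j + 1) + 1) - t ^ (3 * (j + 1))) *
      (t ^ (3 * (j + 1) + 1) * (t * ∑ i ∈ Finset.range (2 * (j + 1)), (t ^ 2) ^ i) *
        ∑ i ∈ Finset.range (4 * j + 3), (t ^ (2 * (j + 1))) ^ i) := by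
    rw [← mul_assoc, h1]
    linear_combination -h2
  apply le_antisymm <;> rw [Ideal.span_singleton_le_span_singleton]
  · exact ⟨_, key1⟩
  · exact ⟨_, key2⟩
end

section
/- In the group ring ℤ[C_n] with n = 4k+1, the element β = (∑_{r=-k+1}^{k} t^r) - (∑_{r=k+2}^{3k} t^r) is a unit. -/
/-!
With `s := t ^ (2k+1)` one has `β * t^k * (1 + s) = 1 + t`, while `1 + s = (1 + t) * γ'` for the
alternating geometric sum `γ' = ∑_{i ≤ 2k} (-t)^i`. Hence `(1 + t) * (β * t^k * γ') = 1 + t`, and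
`1 + t` can be cancelled: `(1 + t) * ∑_{i < n} (-t)^i = 1 + t^n = 2` and `ℤ[C_n]` has no additive
torsion, being free over `ℤ`.
-/

open Polynomial Finset

theorem Polynomial.isAddTorsionFree_quotient_span_monic {R : Type*} [CommRing R] [IsDomain R]
    [CharZero R] {f : R[X]} (hf : f.Monic) : IsAddTorsionFree (R[X] ⧸ Ideal.span {f}) :=
  have : Module.Free R (AdjoinRoot f) := .of_basis (AdjoinRoot.powerBasis' hf).basis
  .of_isTorsionFree R (AdjoinRoot f)

section CommRing

variable {R : Type*} [CommRing R]

theorem one_add_mul_geom_sum_neg_of_odd {n : ℕ} (hn : Odd n) (t : R) :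
    (1 + t) * ∑ i ∈ range n, (-t) ^ i = 1 + t ^ n := by
  linear_combination geom_sum_mul_neg (-t) n - hn.neg_pow t

theorem isLeftRegular_two [IsAddTorsionFree R] : IsLeftRegular (2 : R) := fun a b h ↦
  nsmul_right_injective two_ne_zero (by simpa only [two_nsmul, two_mul] using h)

theorem isLeftRegular_one_add_of_pow_eq_one [IsAddTorsionFree R] {n : ℕ} (hn : Odd n) {t : R}
    (ht : t ^ n = 1) : IsLeftRegular (1 + t) := by
  have h2 : (∑ i ∈ range n, (-t) ^ i) * (1 + t) = 2 := by
    rw [mul_comm, one_add_mul_geom_sum_neg_of_odd hn, ht, one_add_one_eq_two]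
  exact IsLeftRegular.of_mul (h2 ▸ isLeftRegular_two)

theorem geom_sum_range_add (t : R) (a b : ℕ) :
    ∑ i ∈ range (a + b), t ^ i = ∑ i ∈ range a, t ^ i + t ^ a * ∑ i ∈ range b, t ^ i := by
  simp only [sum_range_add, mul_sum, pow_add]

def beta (k : ℕ) (t : R) : R :=
  (∑ j ∈ range (k + 1), t ^ j) + (∑ j ∈ range (k - 1), t ^ (3 * k + 2 + j))
    - ∑ j ∈ range (2 * k - 1), t ^ (k + 2 + j)

def betaInv (k : ℕ) (t : R) : R :=
  t ^ k * ∑ i ∈ range (2 * k + 1), (-t) ^ i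

theorem beta_eq_geom_sums (k : ℕ) (t : R) :
    beta k t = ∑ i ∈ range (k + 1), t ^ i + t ^ (3 * k + 2) * ∑ i ∈ range (k - 1), t ^ i
      - t ^ (k + 2) * ∑ i ∈ range (2 * k - 1), t ^ i := by
  simp only [beta, mul_sum, pow_add]

theorem beta_mul {k : ℕ} {t : R} (ht : t ^ (4 * k + 1) = 1) :
    beta k t * (t ^ k + t ^ (3 * k + 1)) = 1 + t := by
  obtain _ | m := k
  · simp [beta]
  set G : ℕ → R := fun n ↦ ∑ i ∈ range n, t ^ i
  have hC : G (2 * m + 1) = G m + t ^ m * G (m + 1) := by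
    rw [show 2 * m + 1 = m + (m + 1) by ring]; exact geom_sum_range_add t m (m + 1)
  have hA : G (m + 2) = G (m + 1) + t ^ (m + 1) := sum_range_succ _ _
  have hE : G (2 * m + 2) = G m + t ^ m * G (m + 2) := by
    rw [show 2 * m + 2 = m + (m + 2) by ring]; exact geom_sum_range_add t m (m + 2)
  have hE' : G (2 * m + 2) = 1 + t * G (2 * m + 1) := geom_sum_succ.trans (add_comm _ _)
  rw [beta_eq_geom_sums, show m + 1 - 1 = m by omega, show 2 * (m + 1) - 1 = 2 * m + 1 by omega]
  -- expand, reduce the exponents with `t ^ (4k+1) = 1`, and telescope the geometric sums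
  linear_combination (t * G m + t ^ (2 * m + 4) * G m - t ^ 2 * G (2 * m + 1) + 1) * ht
    - t ^ (2 * m + 4) * hC + t ^ (3 * m + 4) * hA - t * hE + t * hE'

theorem one_add_mul_betaInv (k : ℕ) (t : R) :
    (1 + t) * betaInv k t = t ^ k + t ^ (3 * k + 1) := by
  rw [betaInv, mul_left_comm, one_add_mul_geom_sum_neg_of_odd (odd_two_mul_add_one k)]
  ring

theorem beta_mul_betaInv [IsAddTorsionFree R] {k : ℕ} {t : R}
    (ht : t ^ (4 * k + 1) = 1) : beta k t * betaInv k t = 1 := by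
  refine isLeftRegular_one_add_of_pow_eq_one ⟨2 * k, by ring⟩ ht ?_
  change (1 + t) * _ = (1 + t) * 1
  rw [mul_left_comm, one_add_mul_betaInv, beta_mul ht, mul_one]

end CommRing

theorem stmt_3_general (k : ℕ)
    (t : Polynomial ℤ ⧸ Ideal.span {Polynomial.X ^ (4 * k + 1) - 1})
    (ht : t = Ideal.Quotient.mk _ Polynomial.X) :
    IsUnit ((∑ j ∈ Finset.range (k + 1), t ^ j)
      + (∑ j ∈ Finset.range (k - 1), t ^ (3 * k + 2 + j))
      - (∑ j ∈ Finset.range (2 * k - 1), t ^ (k + 2 + j))) := by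
  have : IsAddTorsionFree (ℤ[X] ⧸ Ideal.span {(X : ℤ[X]) ^ (4 * k + 1) - 1}) :=
    isAddTorsionFree_quotient_span_monic (monic_X_pow_sub_C 1 (by omega))
  have htn : t ^ (4 * k + 1) = 1 := by
    rw [ht, ← map_pow, ← map_one (Ideal.Quotient.mk _), Ideal.Quotient.eq,
      Ideal.mem_span_singleton]
  exact IsUnit.of_mul_eq_one (betaInv k t) (beta_mul_betaInv htn)

/-- In `ℤ[C_n] ≅ ℤ[t]/(t^n-1)` with `n = 4k+1`, the element
`β = ∑_{r=-k+1}^{k} t^r - ∑_{r=k+2}^{3k} t^r` is a unit.  Negative exponents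
are interpreted via `t⁻¹ = t^{n-1}`: the first sum is
`∑_{j=0}^{k} t^j + ∑_{j=3k+2}^{4k} t^j`. -/
theorem stmt_3 (k : ℕ) (hk : 1 ≤ k)
    (t : Polynomial ℤ ⧸ Ideal.span {Polynomial.X ^ (4 * k + 1) - 1})
    (ht : t = Ideal.Quotient.mk _ Polynomial.X) :
    IsUnit ((∑ j ∈ Finset.range (k + 1), t ^ j)
      + (∑ j ∈ Finset.range (k - 1), t ^ (3 * k + 2 + j))
      - (∑ j ∈ Finset.range (2 * k - 1), t ^ (k + 2 + j))) :=
  stmt_3_general k t ht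
end

section
/- In ℤ[t]/(t^n - 1), the element (t^{k+1} + t^k - t^{-k} - t^{-(k+1)})·(t^{1+k} + t^{1-k}) equals t^2 - 1, and (t^2 - 1)·(1 + t^2 + t^4 + ⋯ + t^{4k}) equals t - 1 when n = 4k+1. -/
/-- In `ℤ[t]/(t^n - 1)` with `n = 4k+1`:
`(t^{k+1} + t^k - t^{-k} - t^{-(k+1)})·(t^{1+k} + t^{1-k}) = t^2 - 1`, and
`(t^2 - 1)·(1 + t^2 + ⋯ + t^{4k}) = t - 1`.  Negative exponents are
interpreted via `t⁻¹ = t^{n-1}`, so `t^{-k} = t^{3k+1}`, `t^{-(k+1)} = t^{3k}`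
and `t^{1-k} = t^{3k+2}`. -/
theorem stmt_5 (k : ℕ) (hk : 1 ≤ k)
    (t : Polynomial ℤ ⧸ Ideal.span {Polynomial.X ^ (4 * k + 1) - 1})
    (ht : t = Ideal.Quotient.mk _ Polynomial.X) :
    (t ^ (k + 1) + t ^ k - t ^ (3 * k + 1) - t ^ (3 * k))
        * (t ^ (k + 1) + t ^ (3 * k + 2)) = t ^ 2 - 1
      ∧ (t ^ 2 - 1) * (∑ j ∈ Finset.range (2 * k + 1), t ^ (2 * j)) = t - 1 := by
  have h : t ^ (4 * k + 1) = 1 := by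
    subst ht
    rw [← map_pow, ← sub_eq_zero, ← map_one (Ideal.Quotient.mk _), ← map_sub,
      Ideal.Quotient.eq_zero_iff_mem]
    exact Ideal.subset_span rfl
  constructor
  · linear_combination (t ^ 2 - t ^ (2 * k + 2) - t ^ (2 * k + 1) - 1) * h
  · have hs : (∑ j ∈ Finset.range (2 * k + 1), t ^ (2 * j))
        = ∑ j ∈ Finset.range (2 * k + 1), (t ^ 2) ^ j := by
      simp [pow_mul]
    rw [hs, mul_comm (t ^ 2 - 1), geom_sum_mul]
    linear_combination t * h
end

section
/- If an element u of ℤ[C_n] satisfies u·(1 - t^{-1}) generates the same ideal as (1 - t^{-1}) and Σ·u = Σ, then u is a unit in ℤ[C_n]. -/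
/-!
The hypothesis on ideals gives `γ` with `(γu - 1)(1 - t⁻¹) = 0`, so `γu - 1` is killed by `t - 1`.
As `X ^ n - 1 = Σ(X)·(X - 1)` with `X - 1` monic, the annihilator of `t - 1` is generated by `Σ`,
so `γu = 1 + cΣ`; then `Σu = Σ` makes `γ - cΣ` an inverse of `u`.
-/

open Polynomial

theorem isUnit_of_mul_sub_one_mem_span {R : Type*} [CommRing R] {x u γ : R}
    (hxu : x * u = x) (hγ : γ * u - 1 ∈ Ideal.span {x}) : IsUnit u := by
  obtain ⟨c, hc⟩ := Ideal.mem_span_singleton'.mp hγ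
  refine .of_mul_eq_one (γ - c * x) ?_
  calc u * (γ - c * x) = γ * u - c * (x * u) := by ring
    _ = 1 := by rw [hxu, hc]; ring

theorem exists_mul_sub_one_mul_eq_zero_of_span_mul_eq {R : Type*} [CommRing R] {u d : R}
    (h : Ideal.span {u * d} = Ideal.span {d}) : ∃ γ, (γ * u - 1) * d = 0 := by
  obtain ⟨γ, hγ⟩ := Ideal.mem_span_singleton'.mp (h ▸ Ideal.mem_span_singleton_self d)
  exact ⟨γ, by rw [sub_mul, mul_assoc, hγ, one_mul, sub_self]⟩

theorem Ideal.Quotient.mem_span_mk_of_mul_mk_eq_zero {R : Type*} [CommRing R] {f g h : R}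
    (hf : f = g * h) (hh : IsRightRegular h) {a : R ⧸ Ideal.span {f}}
    (ha : a * Ideal.Quotient.mk _ h = 0) : a ∈ Ideal.span {Ideal.Quotient.mk _ g} := by
  obtain ⟨p, rfl⟩ := Ideal.Quotient.mk_surjective a
  rw [← map_mul, Ideal.Quotient.eq_zero_iff_mem, Ideal.mem_span_singleton'] at ha
  obtain ⟨q, hq⟩ := ha
  have hp : p = q * g := hh (by simp only [← hq, hf, mul_assoc])
  exact Ideal.mem_span_singleton'.mpr ⟨Ideal.Quotient.mk _ q, by rw [hp, map_mul]⟩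

theorem mem_span_geom_sum_of_mul_X_sub_one_eq_zero {R : Type*} [CommRing R] {n : ℕ}
    {a : R[X] ⧸ Ideal.span {X ^ n - 1}} (ha : a * (Ideal.Quotient.mk _ X - 1) = 0) :
    a ∈ Ideal.span {∑ i ∈ Finset.range n, Ideal.Quotient.mk _ X ^ i} := by
  have h := Ideal.Quotient.mem_span_mk_of_mul_mk_eq_zero (geom_sum_mul X n).symm
    (monic_X_sub_C (1 : R)).isRegular.right (by simpa using ha)
  simpa using h

theorem mk_X_pow_eq_one (R : Type*) [CommRing R] (n : ℕ) :
    Ideal.Quotient.mk (Ideal.span {X ^ n - 1}) (X : R[X]) ^ n = 1 := by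
  rw [← map_pow, ← sub_eq_zero, ← map_one (Ideal.Quotient.mk _), ← map_sub,
    Ideal.Quotient.eq_zero_iff_mem]
  exact Ideal.mem_span_singleton_self _

theorem one_sub_pow_pred_mul_self {M : Type*} [Ring M] {t : M} {n : ℕ} (hn : n ≠ 0)
    (ht : t ^ n = 1) : (1 - t ^ (n - 1)) * t = t - 1 := by
  rw [sub_mul, one_mul, ← pow_succ, Nat.sub_add_cancel (Nat.one_le_iff_ne_zero.mpr hn), ht]

/-- If an element `u` of `ℤ[C_n] ≅ ℤ[t]/(t^n-1)` (with `n ≥ 2`) is such that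
`u·(1 - t⁻¹)` generates the same ideal as `1 - t⁻¹` (where `t⁻¹ = t^{n-1}`),
and `Σ·u = Σ` for `Σ = ∑_{i=0}^{n-1} t^i`, then `u` is a unit. -/
theorem stmt_6 (n : ℕ) (hn : 2 ≤ n)
    (t : Polynomial ℤ ⧸ Ideal.span {Polynomial.X ^ n - 1})
    (ht : t = Ideal.Quotient.mk _ Polynomial.X)
    (u : Polynomial ℤ ⧸ Ideal.span {Polynomial.X ^ n - 1})
    (h1 : Ideal.span {u * (1 - t ^ (n - 1))} = Ideal.span {1 - t ^ (n - 1)})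
    (h2 : (∑ i ∈ Finset.range n, t ^ i) * u = ∑ i ∈ Finset.range n, t ^ i) :
    IsUnit u := by
  subst ht
  obtain ⟨γ, hγ⟩ := exists_mul_sub_one_mul_eq_zero_of_span_mul_eq h1
  refine isUnit_of_mul_sub_one_mem_span (γ := γ) h2
    (mem_span_geom_sum_of_mul_X_sub_one_eq_zero ?_)
  rw [← one_sub_pow_pred_mul_self (by omega) (mk_X_pow_eq_one ℤ n), ← mul_assoc, hγ, zero_mul]
end
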